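/- arXiv:2309.03556 — 3 statements merged into one kernel-verified Lean document; each statement's English description precedes it below -/
import Mathlib

section
/- Let R be an n×n real symmetric positive definite matrix, let γ > 0 be a real number, let t be a real number, and let x : ℝ → ℝⁿ be continuously differentiable on [t−γ, t]. Then −γ ∫_{t−γ}^{t} ẋ(ω)ᵀ R ẋ(ω) dω ≤ (x(t), x(t−γ))ᵀ [[−R, R],[R, −R]] (x(t), x(t−γ)); equivalently, γ ∫_{t−γ}^{t} ẋ(ω)ᵀ R ẋ(ω) dω ≥ (x(t) − x(t−γ))ᵀ R (x(t) − x(t−γ)). -/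
open Matrix MeasureTheory intervalIntegral

/-- **Lemma 1 (Jensen-type integral inequality).**
For an `n × n` real symmetric positive definite matrix `R`, a scalar `γ > 0`, a time `t`, and a
function `x : ℝ → ℝⁿ` continuously differentiable on `[t - γ, t]` (with derivative `x'`), one has
`-γ ∫_{t-γ}^{t} x'(ω)ᵀ R x'(ω) dω ≤ (x(t), x(t-γ))ᵀ [[-R, R], [R, -R]] (x(t), x(t-γ))`;
equivalently `γ ∫_{t-γ}^{t} x'(ω)ᵀ R x'(ω) dω ≥ (x(t) - x(t-γ))ᵀ R (x(t) - x(t-γ))`. -/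
theorem jensen_integral_inequality
    (n : ℕ) (R : Matrix (Fin n) (Fin n) ℝ) (hR : R.PosDef)
    (γ : ℝ) (hγ : 0 < γ) (t : ℝ)
    (x x' : ℝ → Fin n → ℝ)
    (hx : ∀ s ∈ Set.Icc (t - γ) t, HasDerivWithinAt x (x' s) (Set.Icc (t - γ) t) s)
    (hx' : ContinuousOn x' (Set.Icc (t - γ) t)) :
    (-γ) * (∫ ω in (t - γ)..t, x' ω ⬝ᵥ (R *ᵥ x' ω)) ≤
      (Sum.elim (x t) (x (t - γ))) ⬝ᵥ
        ((Matrix.fromBlocks (-R) R R (-R)) *ᵥ (Sum.elim (x t) (x (t - γ)))) ∧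
    γ * (∫ ω in (t - γ)..t, x' ω ⬝ᵥ (R *ᵥ x' ω)) ≥
      (x t - x (t - γ)) ⬝ᵥ (R *ᵥ (x t - x (t - γ))) := by
  have hle : t - γ ≤ t := by linarith
  set v : Fin n → ℝ := x t - x (t - γ) with hv
  set w : Fin n → ℝ := γ⁻¹ • v with hw
  set I : ℝ := ∫ ω in (t - γ)..t, x' ω ⬝ᵥ (R *ᵥ x' ω) with hI
  set c : ℝ := v ⬝ᵥ (R *ᵥ v) with hc
  have hxc : ContinuousOn x (Set.Icc (t - γ) t) := fun s hs => (hx s hs).continuousWithinAt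
  have hxci : ∀ i, ContinuousOn (fun ω => x' ω i) (Set.Icc (t - γ) t) :=
    fun i => (continuous_apply i).comp_continuousOn hx'
  have hint : ∀ i, IntervalIntegrable (fun ω => x' ω i) volume (t - γ) t := by
    intro i
    exact (hxci i).intervalIntegrable_of_Icc hle
  -- componentwise FTC
  have hFTC : ∀ i, (∫ ω in (t - γ)..t, x' ω i) = v i := by
    intro i
    have h := intervalIntegral.integral_eq_sub_of_hasDeriv_right_of_le hle
      (f := fun s => x s i) (f' := fun s => x' s i)
      ((continuous_apply i).comp_continuousOn hxc)
      (fun s hs => by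
        have h1 : HasDerivWithinAt x (x' s) (Set.Icc (t - γ) t) s :=
          hx s (Set.mem_Icc_of_Ioo hs)
        have h2 : HasDerivWithinAt (fun u => x u i) (x' s i) (Set.Icc (t - γ) t) s :=
          ((ContinuousLinearMap.proj (R := ℝ) (φ := fun _ : Fin n => ℝ) i).hasFDerivAt).comp_hasDerivWithinAt s h1
        exact h2.mono_of_mem_nhdsWithin (Icc_mem_nhdsGT_of_mem ⟨hs.1.le, hs.2⟩))
      (hint i)
    simpa [hv] using h
  -- integral of x' dotted with a constant vector
  have hlin : ∀ u : Fin n → ℝ, (∫ ω in (t - γ)..t, x' ω ⬝ᵥ u) = v ⬝ᵥ u := by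
    intro u
    simp only [dotProduct]
    rw [intervalIntegral.integral_finset_sum (fun i _ => (hint i).mul_const (u i))]
    exact Finset.sum_congr rfl fun i _ => by
      rw [intervalIntegral.integral_mul_const, hFTC i]
  -- continuity / integrability of the quadratic form
  have hcq : ContinuousOn (fun ω => x' ω ⬝ᵥ (R *ᵥ x' ω)) (Set.Icc (t - γ) t) := by
    simp only [dotProduct, mulVec]
    apply continuousOn_finset_sum
    intro i _
    exact (hxci i).mul (continuousOn_finset_sum _ fun j _ => (hxci j).const_smul (R i j))
  have hintq : IntervalIntegrable (fun ω => x' ω ⬝ᵥ (R *ᵥ x' ω)) volume (t - γ) t :=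
    hcq.intervalIntegrable_of_Icc hle
  have hintl : ∀ u : Fin n → ℝ, IntervalIntegrable (fun ω => x' ω ⬝ᵥ u) volume (t - γ) t := by
    intro u
    refine ContinuousOn.intervalIntegrable_of_Icc hle ?_
    simp only [dotProduct]
    exact continuousOn_finset_sum _ fun i _ => (hxci i).mul continuousOn_const
  -- the nonnegative integral
  have h0 : 0 ≤ ∫ ω in (t - γ)..t, (x' ω - w) ⬝ᵥ (R *ᵥ (x' ω - w)) := by
    apply intervalIntegral.integral_nonneg hle
    intro u _
    simpa using hR.posSemidef.dotProduct_mulVec_nonneg (x' u - w)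
  -- pointwise expansion
  have hpt : ∀ ω, (x' ω - w) ⬝ᵥ (R *ᵥ (x' ω - w)) =
      x' ω ⬝ᵥ (R *ᵥ x' ω) - x' ω ⬝ᵥ (R *ᵥ w) - x' ω ⬝ᵥ (w ᵥ* R) + w ⬝ᵥ (R *ᵥ w) := by
    intro ω
    have hswap : w ⬝ᵥ (R *ᵥ x' ω) = x' ω ⬝ᵥ (w ᵥ* R) := by
      rw [Matrix.dotProduct_mulVec, dotProduct_comm]
    simp only [Matrix.mulVec_sub, sub_dotProduct, dotProduct_sub, hswap]
    ring
  have hsplit : (∫ ω in (t - γ)..t, (x' ω - w) ⬝ᵥ (R *ᵥ (x' ω - w)))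
      = I - v ⬝ᵥ (R *ᵥ w) - v ⬝ᵥ (w ᵥ* R) + γ * (w ⬝ᵥ (R *ᵥ w)) := by
    simp only [hpt]
    rw [intervalIntegral.integral_add (((hintq.sub (hintl _)).sub (hintl _)))
        intervalIntegrable_const,
      intervalIntegral.integral_sub (hintq.sub (hintl _)) (hintl _),
      intervalIntegral.integral_sub hintq (hintl _),
      hlin, hlin, intervalIntegral.integral_const]
    rw [smul_eq_mul, hI]
    ring_nf
  -- compute the scalar quantities
  have h1 : v ⬝ᵥ (R *ᵥ w) = γ⁻¹ * c := by
    rw [hw, Matrix.mulVec_smul, dotProduct_smul]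
    rfl
  have h2 : v ⬝ᵥ (w ᵥ* R) = γ⁻¹ * c := by
    rw [dotProduct_comm, ← Matrix.dotProduct_mulVec, hw, smul_dotProduct]
    rfl
  have h3 : w ⬝ᵥ (R *ᵥ w) = γ⁻¹ * (γ⁻¹ * c) := by
    rw [hw, Matrix.mulVec_smul, dotProduct_smul, smul_dotProduct]
    simp [mul_assoc, hc]
  have hkey : c ≤ γ * I := by
    rw [hsplit, h1, h2, h3] at h0
    have hγ' : γ ≠ 0 := ne_of_gt hγ
    have e : γ * (γ⁻¹ * (γ⁻¹ * c)) = γ⁻¹ * c := by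
      field_simp
    rw [e] at h0
    have h4 : γ⁻¹ * c ≤ I := by linarith
    have h5 : γ * (γ⁻¹ * c) ≤ γ * I := mul_le_mul_of_nonneg_left h4 hγ.le
    rwa [← mul_assoc, mul_inv_cancel₀ hγ', one_mul] at h5
  refine ⟨?_, hkey⟩
  -- the block quadratic form equals -c
  have hblock : (Sum.elim (x t) (x (t - γ))) ⬝ᵥ
      ((Matrix.fromBlocks (-R) R R (-R)) *ᵥ (Sum.elim (x t) (x (t - γ)))) = -c := by
    rw [Matrix.fromBlocks_mulVec, sumElim_dotProduct_sumElim, hc, hv]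
    simp only [Matrix.neg_mulVec, Matrix.mulVec_sub, dotProduct_add,
      dotProduct_neg, sub_dotProduct, dotProduct_sub,
      Sum.elim_comp_inl, Sum.elim_comp_inr]
    ring
  rw [hblock]
  linarith [hkey]
end

section
/- Let R be an n×n real symmetric positive definite matrix, let 0 < d₁ ≤ d ≤ d₂ be real numbers, let t be a real number, and let x : ℝ → ℝⁿ be continuously differentiable on [t−d₂, t−d₁]. Then −(d₂ − d₁) ∫_{t−d₂}^{t−d₁} ẋ(ω)ᵀ R ẋ(ω) dω ≤ H(t)ᵀ Ω H(t), where H(t) = (x(t−d₁), x(t−d), x(t−d₂)) ∈ ℝ^{3n} and Ω is the 3n×3n block matrix [[−R, R, 0],[R, −2R, R],[0, R, −R]]. -/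
open Matrix MeasureTheory intervalIntegral

lemma dot_nonneg (R : Matrix (Fin n) (Fin n) ℝ) (hR : R.PosSemidef) (u : Fin n → ℝ) :
    0 ≤ u ⬝ᵥ R *ᵥ u := by
  simpa using hR.re_dotProduct_nonneg u

lemma dot_symm (R : Matrix (Fin n) (Fin n) ℝ) (hsym : R.IsSymm) (u v : Fin n → ℝ) :
    u ⬝ᵥ R *ᵥ v = v ⬝ᵥ R *ᵥ u := by
  rw [dotProduct_mulVec, dotProduct_comm, ← mulVec_transpose, hsym.eq]

noncomputable def dotCLM (w : Fin n → ℝ) : (Fin n → ℝ) →L[ℝ] ℝ :=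
  LinearMap.toContinuousLinearMap
    { toFun := fun v => w ⬝ᵥ v
      map_add' := fun a b => dotProduct_add w a b
      map_smul' := fun c a => by simp [dotProduct_smul] }

@[simp] lemma dotCLM_apply (w v : Fin n → ℝ) : dotCLM w v = w ⬝ᵥ v := rfl

lemma integral_dot {α β : ℝ} (w : Fin n → ℝ) (R : Matrix (Fin n) (Fin n) ℝ)
    {f : ℝ → Fin n → ℝ} (hint : IntervalIntegrable f volume α β) :
    (∫ ω in α..β, w ⬝ᵥ R *ᵥ f ω) = w ⬝ᵥ R *ᵥ (∫ ω in α..β, f ω) := by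
  have := (dotCLM (n := n) (R.vecMul w)).intervalIntegral_comp_comm hint
  simpa [dotProduct_mulVec] using this

lemma contOn_comp_dot {s : Set ℝ} (w : Fin n → ℝ) (R : Matrix (Fin n) (Fin n) ℝ)
    {f : ℝ → Fin n → ℝ} (hf : ContinuousOn f s) :
    ContinuousOn (fun ω => w ⬝ᵥ R *ᵥ f ω) s := by
  simp only [dotProduct, mulVec]
  exact continuousOn_finset_sum _ fun p _ => continuousOn_const.mul
    (continuousOn_finset_sum _ fun q _ => continuousOn_const.mul
      ((continuous_apply q).comp_continuousOn hf))

lemma contOn_quad {s : Set ℝ} (R : Matrix (Fin n) (Fin n) ℝ)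
    {f : ℝ → Fin n → ℝ} (hf : ContinuousOn f s) :
    ContinuousOn (fun ω => f ω ⬝ᵥ R *ᵥ f ω) s := by
  simp only [dotProduct, mulVec]
  exact continuousOn_finset_sum _ fun p _ => ((continuous_apply p).comp_continuousOn hf).mul
    (continuousOn_finset_sum _ fun q _ => continuousOn_const.mul
      ((continuous_apply q).comp_continuousOn hf))

lemma jensen (R : Matrix (Fin n) (Fin n) ℝ) (hR : R.PosDef) {α β : ℝ} (hab : α ≤ β)
    (f : ℝ → Fin n → ℝ) (hf : ContinuousOn f (Set.Icc α β)) :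
    (∫ ω in α..β, f ω) ⬝ᵥ R *ᵥ (∫ ω in α..β, f ω) ≤ (β - α) * ∫ ω in α..β, f ω ⬝ᵥ R *ᵥ f ω := by
  rcases eq_or_lt_of_le hab with h | h
  · subst h; simp
  have hpos : (0:ℝ) < β - α := sub_pos.mpr h
  have hu : Set.uIcc α β = Set.Icc α β := Set.uIcc_of_le hab
  have hint : IntervalIntegrable f volume α β := by
    apply ContinuousOn.intervalIntegrable; rw [hu]; exact hf
  have hsym : R.IsSymm := by
    have := hR.isHermitian
    rwa [Matrix.IsHermitian, conjTranspose_eq_transpose_of_trivial] at this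
  set J := ∫ ω in α..β, f ω with hJ
  set c : Fin n → ℝ := (β - α)⁻¹ • J with hc
  have hqint : IntervalIntegrable (fun ω => f ω ⬝ᵥ R *ᵥ f ω) volume α β := by
    apply ContinuousOn.intervalIntegrable; rw [hu]; exact contOn_quad R hf
  have hlcont : ContinuousOn (fun ω => 2 * (c ⬝ᵥ R *ᵥ f ω)) (Set.Icc α β) :=
    continuousOn_const.mul (contOn_comp_dot c R hf)
  have hl2int : IntervalIntegrable (fun ω => 2 * (c ⬝ᵥ R *ᵥ f ω)) volume α β := by
    apply ContinuousOn.intervalIntegrable; rw [hu]; exact hlcont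
  have hlint : IntervalIntegrable (fun ω => 2 * (c ⬝ᵥ R *ᵥ f ω) - c ⬝ᵥ R *ᵥ c) volume α β :=
    hl2int.sub intervalIntegrable_const
  have hmono : (∫ ω in α..β, (2 * (c ⬝ᵥ R *ᵥ f ω) - c ⬝ᵥ R *ᵥ c)) ≤
      ∫ ω in α..β, f ω ⬝ᵥ R *ᵥ f ω := by
    apply intervalIntegral.integral_mono_on hab hlint hqint
    intro s hs
    have h0 : 0 ≤ (f s - c) ⬝ᵥ R *ᵥ (f s - c) := dot_nonneg R hR.posSemidef _
    have hcross : c ⬝ᵥ R *ᵥ f s = f s ⬝ᵥ R *ᵥ c := dot_symm R hsym c (f s)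
    simp only [sub_dotProduct, dotProduct_sub, mulVec_sub] at h0
    linarith
  have hlval : (∫ ω in α..β, (2 * (c ⬝ᵥ R *ᵥ f ω) - c ⬝ᵥ R *ᵥ c)) =
      2 * (c ⬝ᵥ R *ᵥ J) - (β - α) * (c ⬝ᵥ R *ᵥ c) := by
    rw [intervalIntegral.integral_sub hl2int intervalIntegrable_const,
      intervalIntegral.integral_const_mul, integral_dot c R hint,
      intervalIntegral.integral_const, smul_eq_mul, ← hJ]
  have hcRJ : c ⬝ᵥ R *ᵥ J = (β - α)⁻¹ * (J ⬝ᵥ R *ᵥ J) := by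
    rw [hc]; simp [smul_dotProduct]
  have hcRc : c ⬝ᵥ R *ᵥ c = (β - α)⁻¹ * ((β - α)⁻¹ * (J ⬝ᵥ R *ᵥ J)) := by
    rw [hc]; simp [smul_dotProduct, mulVec_smul, dotProduct_smul]
  rw [hlval, hcRJ, hcRc] at hmono
  have hne : (β - α) ≠ 0 := ne_of_gt hpos
  have key : (β - α)⁻¹ * (J ⬝ᵥ R *ᵥ J) ≤ ∫ ω in α..β, f ω ⬝ᵥ R *ᵥ f ω := by
    have e : 2 * ((β-α)⁻¹ * (J ⬝ᵥ R *ᵥ J)) - (β-α) * ((β-α)⁻¹ * ((β-α)⁻¹ * (J ⬝ᵥ R *ᵥ J)))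
        = (β-α)⁻¹ * (J ⬝ᵥ R *ᵥ J) := by field_simp; ring
    linarith
  calc J ⬝ᵥ R *ᵥ J = (β - α) * ((β - α)⁻¹ * (J ⬝ᵥ R *ᵥ J)) := by field_simp
    _ ≤ (β - α) * ∫ ω in α..β, f ω ⬝ᵥ R *ᵥ f ω := mul_le_mul_of_nonneg_left key hpos.le

lemma kron_quad (A : Matrix (Fin 3) (Fin 3) ℝ) (R : Matrix (Fin n) (Fin n) ℝ) (H : Fin 3 → Fin n → ℝ) :
    (fun p : Fin 3 × Fin n => H p.1 p.2) ⬝ᵥ ((kroneckerMap (· * ·) A R) *ᵥ fun p => H p.1 p.2)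
      = ∑ i, ∑ j, A i j * (H i ⬝ᵥ R *ᵥ H j) := by
  simp only [dotProduct, mulVec, Fintype.sum_prod_type, kroneckerMap, of_apply, Finset.mul_sum,
    Finset.sum_mul]
  refine Finset.sum_congr rfl fun i _ => ?_
  rw [Finset.sum_comm]
  refine Finset.sum_congr rfl fun j _ => ?_
  refine Finset.sum_congr rfl fun p _ => Finset.sum_congr rfl fun q _ => by ring

/-- **Lemma 2 (interval-delay Jensen-type integral inequality).**
For an `n × n` real symmetric positive definite matrix `R`, scalars `0 < d₁ ≤ d ≤ d₂`, a time `t`,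
and a function `x : ℝ → ℝⁿ` continuously differentiable on `[t - d₂, t - d₁]` (with derivative
`x'`), one has `-(d₂ - d₁) ∫_{t-d₂}^{t-d₁} x'(ω)ᵀ R x'(ω) dω ≤ H(t)ᵀ Ω H(t)`, where
`H(t) = (x(t-d₁), x(t-d), x(t-d₂))` and `Ω = [[-R, R, 0], [R, -2R, R], [0, R, -R]]`. -/
theorem interval_jensen_integral_inequality
    (n : ℕ) (R : Matrix (Fin n) (Fin n) ℝ) (hR : R.PosDef)
    (d₁ d d₂ : ℝ) (hd₁ : 0 < d₁) (hdl : d₁ ≤ d) (hdu : d ≤ d₂) (t : ℝ)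
    (x x' : ℝ → Fin n → ℝ)
    (hx : ∀ s ∈ Set.Icc (t - d₂) (t - d₁),
      HasDerivWithinAt x (x' s) (Set.Icc (t - d₂) (t - d₁)) s)
    (hx' : ContinuousOn x' (Set.Icc (t - d₂) (t - d₁))) :
    (-(d₂ - d₁)) * (∫ ω in (t - d₂)..(t - d₁), x' ω ⬝ᵥ (R *ᵥ x' ω)) ≤
      (fun p : Fin 3 × Fin n => ![x (t - d₁), x (t - d), x (t - d₂)] p.1 p.2) ⬝ᵥ
        ((Matrix.kroneckerMap (· * ·)
            (!![(-1 : ℝ), 1, 0; 1, -2, 1; 0, 1, -1]) R) *ᵥ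
          (fun p : Fin 3 × Fin n => ![x (t - d₁), x (t - d), x (t - d₂)] p.1 p.2)) := by
  have hsym : R.IsSymm := by
    have := hR.isHermitian
    rwa [Matrix.IsHermitian, conjTranspose_eq_transpose_of_trivial] at this
  set a₂ := t - d₂ with ha₂
  set aₘ := t - d with haₘ
  set a₁ := t - d₁ with ha₁
  have h21 : a₂ ≤ a₁ := by simp [ha₂, ha₁]; linarith
  have h2m : a₂ ≤ aₘ := by simp [ha₂, haₘ]; linarith
  have hm1 : aₘ ≤ a₁ := by simp [haₘ, ha₁]; linarith
  set u := x a₁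
  set v := x aₘ
  set w := x a₂
  -- FTC on subintervals
  have hxc : ContinuousOn x (Set.Icc a₂ a₁) := fun s hs => (hx s hs).continuousWithinAt
  have ftc : ∀ p q : ℝ, a₂ ≤ p → p ≤ q → q ≤ a₁ →
      (∫ ω in p..q, x' ω) = x q - x p := by
    intro p q hp hpq hq
    have hsub : Set.Icc p q ⊆ Set.Icc a₂ a₁ := Set.Icc_subset_Icc hp hq
    apply intervalIntegral.integral_eq_sub_of_hasDeriv_right_of_le hpq
      (hxc.mono hsub)
    · intro s hs
      have hsI : s ∈ Set.Ioo a₂ a₁ := Set.Ioo_subset_Ioo hp hq hs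
      have : HasDerivAt x (x' s) s := by
        apply (hx s (Set.Ioo_subset_Icc_self hsI)).hasDerivAt
        exact Icc_mem_nhds hsI.1 hsI.2
      exact this.hasDerivWithinAt
    · apply ContinuousOn.intervalIntegrable
      rw [Set.uIcc_of_le hpq]
      exact hx'.mono hsub
  have hInt1 : (∫ ω in a₂..aₘ, x' ω) = v - w := ftc a₂ aₘ le_rfl h2m hm1
  have hInt2 : (∫ ω in aₘ..a₁, x' ω) = u - v := ftc aₘ a₁ h2m hm1 le_rfl
  -- Jensen on subintervals
  have hJ1 := jensen R hR h2m x' (hx'.mono (Set.Icc_subset_Icc le_rfl hm1))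
  have hJ2 := jensen R hR hm1 x' (hx'.mono (Set.Icc_subset_Icc h2m le_rfl))
  rw [hInt1] at hJ1
  rw [hInt2] at hJ2
  -- split the integral
  set q : ℝ → ℝ := fun ω => x' ω ⬝ᵥ R *ᵥ x' ω with hq
  have hqi : ∀ p r : ℝ, a₂ ≤ p → p ≤ r → r ≤ a₁ → IntervalIntegrable q volume p r := by
    intro p r hp hpr hr
    apply ContinuousOn.intervalIntegrable
    rw [Set.uIcc_of_le hpr]
    exact contOn_quad R (hx'.mono (Set.Icc_subset_Icc hp hr))
  have hsplit : (∫ ω in a₂..aₘ, q ω) + (∫ ω in aₘ..a₁, q ω) = ∫ ω in a₂..a₁, q ω :=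
    intervalIntegral.integral_add_adjacent_intervals (hqi a₂ aₘ le_rfl h2m hm1)
      (hqi aₘ a₁ h2m hm1 le_rfl)
  have hI1nn : 0 ≤ ∫ ω in a₂..aₘ, q ω := by
    apply intervalIntegral.integral_nonneg h2m
    exact fun s _ => dot_nonneg R hR.posSemidef (x' s)
  have hI2nn : 0 ≤ ∫ ω in aₘ..a₁, q ω := by
    apply intervalIntegral.integral_nonneg hm1
    exact fun s _ => dot_nonneg R hR.posSemidef (x' s)
  -- RHS value
  have hRHS : (fun p : Fin 3 × Fin n => ![u, v, w] p.1 p.2) ⬝ᵥ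
        ((Matrix.kroneckerMap (· * ·)
            (!![(-1 : ℝ), 1, 0; 1, -2, 1; 0, 1, -1]) R) *ᵥ
          (fun p : Fin 3 × Fin n => ![u, v, w] p.1 p.2))
      = -((u - v) ⬝ᵥ R *ᵥ (u - v) + (v - w) ⬝ᵥ R *ᵥ (v - w)) := by
    rw [kron_quad]
    have s1 : v ⬝ᵥ R *ᵥ u = u ⬝ᵥ R *ᵥ v := dot_symm R hsym v u
    have s2 : w ⬝ᵥ R *ᵥ v = v ⬝ᵥ R *ᵥ w := dot_symm R hsym w v
    simp only [Fin.sum_univ_three, Matrix.cons_val_zero, Matrix.cons_val_one, Matrix.head_cons,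
      Matrix.cons_val_two, Matrix.tail_cons, Matrix.head_fin_const, Matrix.of_apply,
      Matrix.cons_val', Matrix.empty_val', Matrix.cons_val_fin_one]
    simp only [sub_dotProduct, dotProduct_sub, mulVec_sub]
    linarith [s1, s2]
  rw [hRHS]
  -- lengths
  have lm2 : aₘ - a₂ = d₂ - d := by rw [haₘ, ha₂]; ring
  have l1m : a₁ - aₘ = d - d₁ := by rw [ha₁, haₘ]; ring
  rw [lm2] at hJ1
  rw [l1m] at hJ2
  have e1 : (d₂ - d) * (∫ ω in a₂..aₘ, q ω) ≤ (d₂ - d₁) * (∫ ω in a₂..aₘ, q ω) :=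
    mul_le_mul_of_nonneg_right (by linarith) hI1nn
  have e2 : (d - d₁) * (∫ ω in aₘ..a₁, q ω) ≤ (d₂ - d₁) * (∫ ω in aₘ..a₁, q ω) :=
    mul_le_mul_of_nonneg_right (by linarith) hI2nn
  have : (u - v) ⬝ᵥ R *ᵥ (u - v) + (v - w) ⬝ᵥ R *ᵥ (v - w) ≤
      (d₂ - d₁) * ∫ ω in a₂..a₁, q ω := by
    rw [← hsplit, mul_add]
    linarith [hJ1, hJ2]
  linarith
end

section
/- The positive-feedback diffusion step of the F2SIE algorithm is a bijection on images: for any positive integers M, N and any key matrix K : Fin M → Fin N → BitVec 8, the map which sends an image P : Fin M → Fin N → BitVec 8 to the image C defined pixel-by-pixel in raster order by C(i₀, j₀) = (P(i₀, j₀) ^^^ K(i₀, j₀)) + K(i₀, j₀) at the first position (i₀, j₀), and at every other position C(i, j) = ((P(i, j) ^^^ K(i, j)) + K(prev(i, j))) ^^^ P(prev(i, j)), where prev(i, j) denotes the position immediately preceding (i, j) in raster order, is a bijection on the set of images Fin M → Fin N → BitVec 8; the analogous negative-feedback diffusion map, defined by the same formula traversing positions in reverse raster order with prev replaced by the immediately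 following position, is also a bijection. -/
/-- The positive-feedback diffusion step (8) of the F2SIE algorithm, traversing the pixels in
raster order (rows first, then columns; position `(i, j)` has raster index `j + N * i`, realized
by `finProdFinEquiv`): the first pixel becomes `(P ^^^ K) + K`, and every other pixel becomes
`((P ^^^ K) + K(prev)) ^^^ P(prev)`, where `prev` is the raster-order predecessor. -/
def posDiffuse (M N : ℕ) (K : Fin M → Fin N → BitVec 8)
    (P : Fin M → Fin N → BitVec 8) : Fin M → Fin N → BitVec 8 :=
  fun i j =>
    let t : Fin (M * N) := finProdFinEquiv (i, j)
    if (t : ℕ) = 0 then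
      (P i j ^^^ K i j) + K i j
    else
      let p := finProdFinEquiv.symm (⟨(t : ℕ) - 1, by have := t.isLt; omega⟩ : Fin (M * N))
      ((P i j ^^^ K i j) + K p.1 p.2) ^^^ P p.1 p.2

/-- The negative-feedback diffusion step (9) of the F2SIE algorithm: the same formula traversing
the pixels in reverse raster order, with `prev` replaced by the raster-order successor. -/
def negDiffuse (M N : ℕ) (K : Fin M → Fin N → BitVec 8)
    (P : Fin M → Fin N → BitVec 8) : Fin M → Fin N → BitVec 8 :=
  fun i j =>
    let t : Fin (M * N) := finProdFinEquiv (i, j)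
    if h : (t : ℕ) = M * N - 1 then
      (P i j ^^^ K i j) + K i j
    else
      let p := finProdFinEquiv.symm (⟨(t : ℕ) + 1, by have := t.isLt; omega⟩ : Fin (M * N))
      ((P i j ^^^ K i j) + K p.1 p.2) ^^^ P p.1 p.2


lemma cancel_step (k c d a b : BitVec 8)
    (h : ((a ^^^ k) + c) ^^^ d = ((b ^^^ k) + c) ^^^ d) : a = b := by
  have h1 : (a ^^^ k) + c = (b ^^^ k) + c := by
    have := congrArg (· ^^^ d) h
    simpa [BitVec.xor_assoc] using this
  have h2 : a ^^^ k = b ^^^ k := add_right_cancel h1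
  have := congrArg (· ^^^ k) h2
  simpa [BitVec.xor_assoc] using this

lemma posDiffuse_injective (M N : ℕ) (K : Fin M → Fin N → BitVec 8) :
    Function.Injective (posDiffuse M N K) := by
  intro P Q h
  have key : ∀ n : ℕ, ∀ hn : n < M * N,
      P (finProdFinEquiv.symm (⟨n, hn⟩ : Fin (M * N))).1 (finProdFinEquiv.symm (⟨n, hn⟩ : Fin (M * N))).2
      = Q (finProdFinEquiv.symm (⟨n, hn⟩ : Fin (M * N))).1 (finProdFinEquiv.symm (⟨n, hn⟩ : Fin (M * N))).2 := by
    intro n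
    induction n using Nat.strong_induction_on with
    | _ n ih =>
      intro hn
      set p := finProdFinEquiv.symm (⟨n, hn⟩ : Fin (M * N)) with hp
      have hpe : finProdFinEquiv (p.1, p.2) = (⟨n, hn⟩ : Fin (M * N)) := by
        rw [hp, Prod.mk.eta, Equiv.apply_symm_apply]
      have h1 := congrFun (congrFun h p.1) p.2
      simp only [posDiffuse, hpe] at h1
      by_cases h0 : n = 0
      · rw [if_pos h0, if_pos h0] at h1
        have h2 : P p.1 p.2 ^^^ K p.1 p.2 = Q p.1 p.2 ^^^ K p.1 p.2 := add_right_cancel h1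
        have h3 := congrArg (· ^^^ K p.1 p.2) h2
        simpa [BitVec.xor_assoc] using h3
      · rw [if_neg h0, if_neg h0] at h1
        have hprev := ih (n - 1) (by omega) (by omega)
        rw [hprev] at h1
        exact cancel_step _ _ _ _ _ h1
  funext i j
  have hv := (finProdFinEquiv (i, j)).isLt
  have := key (finProdFinEquiv (i, j)).val hv
  have he : (⟨(finProdFinEquiv (i, j)).val, hv⟩ : Fin (M * N)) = finProdFinEquiv (i, j) := rfl
  rw [he, Equiv.symm_apply_apply] at this
  exact this

lemma negDiffuse_injective (M N : ℕ) (K : Fin M → Fin N → BitVec 8) :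
    Function.Injective (negDiffuse M N K) := by
  intro P Q h
  have key : ∀ d : ℕ, ∀ n : ℕ, ∀ hn : n < M * N, M * N - 1 - n = d →
      P (finProdFinEquiv.symm (⟨n, hn⟩ : Fin (M * N))).1 (finProdFinEquiv.symm (⟨n, hn⟩ : Fin (M * N))).2
      = Q (finProdFinEquiv.symm (⟨n, hn⟩ : Fin (M * N))).1 (finProdFinEquiv.symm (⟨n, hn⟩ : Fin (M * N))).2 := by
    intro d
    induction d using Nat.strong_induction_on with
    | _ d ih =>
      intro n hn hd
      set p := finProdFinEquiv.symm (⟨n, hn⟩ : Fin (M * N)) with hp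
      have hpe : finProdFinEquiv (p.1, p.2) = (⟨n, hn⟩ : Fin (M * N)) := by
        rw [hp, Prod.mk.eta, Equiv.apply_symm_apply]
      have h1 := congrFun (congrFun h p.1) p.2
      simp only [negDiffuse, hpe] at h1
      by_cases h0 : n = M * N - 1
      · rw [dif_pos h0, dif_pos h0] at h1
        have h2 : P p.1 p.2 ^^^ K p.1 p.2 = Q p.1 p.2 ^^^ K p.1 p.2 := add_right_cancel h1
        have h3 := congrArg (· ^^^ K p.1 p.2) h2
        simpa [BitVec.xor_assoc] using h3
      · rw [dif_neg h0, dif_neg h0] at h1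
        have hnext := ih (M * N - 1 - (n + 1)) (by omega) (n + 1) (by omega) rfl
        rw [hnext] at h1
        exact cancel_step _ _ _ _ _ h1
  funext i j
  have hv := (finProdFinEquiv (i, j)).isLt
  have := key (M * N - 1 - (finProdFinEquiv (i, j)).val) (finProdFinEquiv (i, j)).val hv rfl
  have he : (⟨(finProdFinEquiv (i, j)).val, hv⟩ : Fin (M * N)) = finProdFinEquiv (i, j) := rfl
  rw [he, Equiv.symm_apply_apply] at this
  exact this

instance : Finite (BitVec 8) := Finite.of_equiv (Fin (2 ^ 8)) (Equiv.ofBijective (BitVec.ofFin)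
  ⟨fun a b h => by cases a; cases b; simpa using h, fun b => ⟨b.toFin, rfl⟩⟩)

/-- **The ciphertext-feedback diffusion steps of the F2SIE algorithm are bijections** on images
`Fin M → Fin N → BitVec 8`, for any key matrix `K`. -/
theorem diffusion_bijective (M N : ℕ) [NeZero M] [NeZero N]
    (K : Fin M → Fin N → BitVec 8) :
    Function.Bijective (posDiffuse M N K) ∧ Function.Bijective (negDiffuse M N K) := by
  exact ⟨Finite.injective_iff_bijective.mp (posDiffuse_injective M N K),
    Finite.injective_iff_bijective.mp (negDiffuse_injective M N K)⟩
end
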